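/- arXiv:2004.05761 — 2 statements merged into one kernel-verified Lean document; each statement's English description precedes it below -/
import Mathlib

section
/- Let $\theta \in (0,1)$, $\sigma > 0$, $\lambda \ge 0$, $\mu \in \mathbb{R}$, and $a \le b$ reals. Define $L(x) = \theta \exp((x-\mu)/\sigma) + (1-\theta)\exp(-(x-\mu)/\sigma) + \lambda x$ and $g = \mu + \sigma \ln\left(\frac{\sqrt{\sigma^2\lambda^2 + 4\theta(1-\theta)} - \sigma\lambda}{2\theta}\right)$. Then the minimizer of $L$ over $[a,b]$ is: $g$ if $g \in (a,b)$; $a$ if $g \le a$; $b$ if $g \ge b$. That is, for all $x \in [a,b]$, $L(\max(a, \min(b, g))) \le L(x)$. -/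
set_option maxHeartbeats 1000000


theorem stmt_4 (θ σ lam μ a b : ℝ) (hθ : θ ∈ Set.Ioo (0:ℝ) 1) (hσ : 0 < σ)
    (hlam : 0 ≤ lam) (hab : a ≤ b) :
    let L : ℝ → ℝ := fun x => θ * Real.exp ((x - μ) / σ) + (1 - θ) * Real.exp (-((x - μ) / σ)) + lam * x
    let g := μ + σ * Real.log ((Real.sqrt (σ ^ 2 * lam ^ 2 + 4 * θ * (1 - θ)) - σ * lam) / (2 * θ))
    ∀ x ∈ Set.Icc a b, L (max a (min b g)) ≤ L x := by
  intro L g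
  obtain ⟨hθ0, hθ1⟩ := hθ
  set s := Real.sqrt (σ ^ 2 * lam ^ 2 + 4 * θ * (1 - θ)) with hs
  set c := (s - σ * lam) / (2 * θ) with hc
  have hs2 : s ^ 2 = σ ^ 2 * lam ^ 2 + 4 * θ * (1 - θ) := by
    rw [hs]; exact Real.sq_sqrt (by nlinarith)
  have hsnn : 0 ≤ s := Real.sqrt_nonneg _
  have hsgt : σ * lam < s := by nlinarith [mul_nonneg hσ.le hlam]
  have hcpos : 0 < c := div_pos (by linarith) (by linarith)
  set L' : ℝ → ℝ := fun x =>
    θ * Real.exp ((x - μ) / σ) / σ - (1 - θ) * Real.exp (-((x - μ) / σ)) / σ + lam with hL'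
  have hderiv : ∀ x : ℝ, HasDerivAt L (L' x) x := by
    intro x
    have h1 : HasDerivAt (fun x : ℝ => (x - μ) / σ) (1 / σ) x := by
      simpa using ((hasDerivAt_id x).sub_const μ).div_const σ
    have h2 : HasDerivAt (fun x : ℝ => -((x - μ) / σ)) (-(1 / σ)) x := h1.neg
    have e1 := (h1.exp.const_mul θ)
    have e2 := (h2.exp.const_mul (1 - θ))
    have e3 : HasDerivAt (fun x : ℝ => lam * x) lam x := by
      simpa using (hasDerivAt_id x).const_mul lam
    have := (e1.add e2).add e3
    convert this using 1
    show θ * Real.exp ((x - μ) / σ) / σ - (1 - θ) * Real.exp (-((x - μ) / σ)) / σ + lam = _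
    ring
    all_goals rfl
  have hmono : ∀ x y : ℝ, x ≤ y → L' x ≤ L' y := by
    intro x y hxy
    have e1 : Real.exp ((x - μ) / σ) ≤ Real.exp ((y - μ) / σ) :=
      Real.exp_le_exp.mpr (by apply div_le_div_of_nonneg_right (by linarith) hσ.le)
    have e2 : Real.exp (-((y - μ) / σ)) ≤ Real.exp (-((x - μ) / σ)) :=
      Real.exp_le_exp.mpr (by
        have : (x - μ) / σ ≤ (y - μ) / σ := div_le_div_of_nonneg_right (by linarith) hσ.le
        linarith)
    simp only [hL']
    have h1 : θ * Real.exp ((x - μ) / σ) / σ ≤ θ * Real.exp ((y - μ) / σ) / σ := by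
      apply div_le_div_of_nonneg_right _ hσ.le
      exact mul_le_mul_of_nonneg_left e1 hθ0.le
    have h2 : (1 - θ) * Real.exp (-((y - μ) / σ)) / σ ≤ (1 - θ) * Real.exp (-((x - μ) / σ)) / σ := by
      apply div_le_div_of_nonneg_right _ hσ.le
      exact mul_le_mul_of_nonneg_left e2 (by linarith)
    linarith
  have hglog : (g - μ) / σ = Real.log c := by
    show (μ + σ * Real.log c - μ) / σ = Real.log c
    field_simp
    ring
  have hLg : L' g = 0 := by
    have hexp : Real.exp ((g - μ) / σ) = c := by rw [hglog, Real.exp_log hcpos]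
    have hexpn : Real.exp (-((g - μ) / σ)) = c⁻¹ := by
      rw [Real.exp_neg, hexp]
    simp only [hL', hexp, hexpn]
    have hkey : θ * c ^ 2 + σ * lam * c - (1 - θ) = 0 := by
      rw [hc]
      field_simp
      nlinarith [hs2]
    field_simp
    nlinarith [hkey, mul_pos hcpos hσ]
  have hcontL : Continuous L := by
    apply Continuous.add
    apply Continuous.add
    · exact continuous_const.mul (Real.continuous_exp.comp (by continuity))
    · exact continuous_const.mul (Real.continuous_exp.comp (by continuity))
    · exact continuous_const.mul continuous_id
  have hmonoIci : MonotoneOn L (Set.Ici g) := by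
    apply monotoneOn_of_deriv_nonneg (convex_Ici g) hcontL.continuousOn
    · intro x hx
      exact (hderiv x).differentiableAt.differentiableWithinAt
    · intro x hx
      rw [(hderiv x).deriv]
      rw [interior_Ici] at hx
      have := hmono g x (le_of_lt hx)
      linarith [hLg ▸ this]
  have hantIic : AntitoneOn L (Set.Iic g) := by
    apply antitoneOn_of_deriv_nonpos (convex_Iic g) hcontL.continuousOn
    · intro x hx
      exact (hderiv x).differentiableAt.differentiableWithinAt
    · intro x hx
      rw [(hderiv x).deriv]
      rw [interior_Iic] at hx
      have := hmono x g (le_of_lt hx)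
      linarith [hLg ▸ this]
  intro x hx
  obtain ⟨hax, hxb⟩ := hx
  rcases le_total g a with hga | hag
  · have hm : max a (min b g) = a := by
      rw [min_eq_right (hga.trans hab), max_eq_left hga]
    rw [hm]
    exact hmonoIci (by exact hga) (hga.trans hax) hax
  · rcases le_total b g with hbg | hgb
    · have hm : max a (min b g) = b := by
        rw [min_eq_left hbg, max_eq_right hab]
      rw [hm]
      exact hantIic (hxb.trans hbg) (by exact hbg) hxb
    · have hm : max a (min b g) = g := by
        rw [min_eq_right hgb, max_eq_right hag]
      rw [hm]
      rcases le_total x g with hxg | hgx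
      · exact hantIic hxg (le_refl g) hxg
      · exact hmonoIci (le_refl g) hgx hgx
end

section
/- Let $\sigma > 0$ and $\lambda \ge 0$. The function $\theta \mapsto \frac{\sqrt{\sigma^2\lambda^2 + 4\theta(1-\theta)} - \sigma\lambda}{2\theta}$ is strictly decreasing on $(0,1)$. -/
theorem stmt_8 (σ lam : ℝ) (hσ : 0 < σ) (hlam : 0 ≤ lam) :
    StrictAntiOn (fun θ : ℝ =>
        (Real.sqrt (σ ^ 2 * lam ^ 2 + 4 * θ * (1 - θ)) - σ * lam) / (2 * θ))
      (Set.Ioo 0 1) := by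
  have hc0 : 0 ≤ σ * lam := mul_nonneg hσ.le hlam
  have key : ∀ θ ∈ Set.Ioo (0:ℝ) 1,
      (Real.sqrt (σ ^ 2 * lam ^ 2 + 4 * θ * (1 - θ)) - σ * lam) / (2 * θ)
        = 2 * (1 - θ) / (Real.sqrt (σ ^ 2 * lam ^ 2 + 4 * θ * (1 - θ)) + σ * lam) := by
    intro θ hθ
    obtain ⟨h0, h1⟩ := hθ
    set s := Real.sqrt (σ ^ 2 * lam ^ 2 + 4 * θ * (1 - θ)) with hs
    have hApos : 0 < σ ^ 2 * lam ^ 2 + 4 * θ * (1 - θ) := by nlinarith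
    have hs2 : s ^ 2 = σ ^ 2 * lam ^ 2 + 4 * θ * (1 - θ) := Real.sq_sqrt hApos.le
    have hspos : 0 < s := Real.sqrt_pos.2 hApos
    rw [div_eq_div_iff (ne_of_gt (by linarith)) (ne_of_gt (by linarith))]
    nlinarith [hs2]
  intro a ha b hb hab
  simp only
  rw [key a ha, key b hb]
  obtain ⟨ha0, ha1⟩ := ha
  obtain ⟨hb0, hb1⟩ := hb
  set sa := Real.sqrt (σ ^ 2 * lam ^ 2 + 4 * a * (1 - a)) with hsa
  set sb := Real.sqrt (σ ^ 2 * lam ^ 2 + 4 * b * (1 - b)) with hsb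
  have hAa : 0 < σ ^ 2 * lam ^ 2 + 4 * a * (1 - a) := by nlinarith
  have hAb : 0 < σ ^ 2 * lam ^ 2 + 4 * b * (1 - b) := by nlinarith
  have hsa2 : sa ^ 2 = σ ^ 2 * lam ^ 2 + 4 * a * (1 - a) := Real.sq_sqrt hAa.le
  have hsb2 : sb ^ 2 = σ ^ 2 * lam ^ 2 + 4 * b * (1 - b) := Real.sq_sqrt hAb.le
  have hsapos : 0 < sa := Real.sqrt_pos.2 hAa
  have hsbpos : 0 < sb := Real.sqrt_pos.2 hAb
  have hkey : (1 - b) * sa < (1 - a) * sb := by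
    have hsq : ((1 - b) * sa) ^ 2 < ((1 - a) * sb) ^ 2 := by
      have h1 : ((1 - b) * sa) ^ 2 = (1 - b) ^ 2 * (σ ^ 2 * lam ^ 2 + 4 * a * (1 - a)) := by
        rw [mul_pow, hsa2]
      have h2 : ((1 - a) * sb) ^ 2 = (1 - a) ^ 2 * (σ ^ 2 * lam ^ 2 + 4 * b * (1 - b)) := by
        rw [mul_pow, hsb2]
      rw [h1, h2]
      nlinarith [mul_nonneg (mul_nonneg (sq_nonneg σ) (sq_nonneg lam)) (show (0:ℝ) ≤ (1 - a) ^ 2 - (1 - b) ^ 2 by nlinarith), mul_pos (mul_pos (by linarith : (0:ℝ) < 1 - a) (by linarith : (0:ℝ) < 1 - b)) (by linarith : (0:ℝ) < b - a)]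
    exact lt_of_pow_lt_pow_left₀ 2 (mul_nonneg (by linarith) hsbpos.le) hsq
  rw [div_lt_div_iff₀ (by linarith) (by linarith)]
  nlinarith [mul_le_mul_of_nonneg_left (by linarith : 1 - b ≤ 1 - a) hc0]
end
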